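/- arXiv:2006.11131 — 4 statements merged into one kernel-verified Lean document; each statement's English description precedes it below -/
import Mathlib

section
/- For every real x ≥ 0 and every integer n ≥ 1, assuming H_{t₁}(1,1) = H_{t₂}(1,1) = 1, one has Σ_{k₁=0}^∞ Σ_{k₂=0}^∞ (k₁+k₂)²·S_{k₁,k₂}(nx/2)/(k₁!·k₂!) = [n²x²·A(1,1) + n·x·( (A(1,1)·H_{t₁,t₁}(1,1) + A(1,1)·H_{t₂,t₂}(1,1))/2 + A(1,1)·H_{t₁,t₂}(1,1) + 2·A_{t₁}(1,1) + 2·A_{t₂}(1,1) + A(1,1) ) + A_{t₁,t₁}(1,1) + A_{t₂,t₂}(1,1) + 2·A_{t₁,t₂}(1,1) + A_{t₁}(1,1) + A_{t₂}(1,1)]·e^{(nx/2)·H(1,1)}. -/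
/-- First-order partial derivative with respect to the first variable. -/
noncomputable def pd1 (F : ℝ × ℝ → ℝ) (p : ℝ × ℝ) : ℝ := fderiv ℝ F p (1, 0)

/-- First-order partial derivative with respect to the second variable. -/
noncomputable def pd2 (F : ℝ × ℝ → ℝ) (p : ℝ × ℝ) : ℝ := fderiv ℝ F p (0, 1)

/-!
Put `t₁ = t₂ = eˢ`. With `c_k = S_k(y) / (k₁! k₂!)` the generating relation reads
`Φ(s) := A(eˢ, eˢ) · exp (y · H(eˢ, eˢ)) = ∑ c_k e^{(k₁ + k₂) s}`, an exponential series with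
nonnegative exponents that converges for `s` slightly beyond `0` and may therefore be differentiated
termwise twice; this gives `∑ (k₁ + k₂)² c_k = Φ''(0)`. The chain rule along the curve
`s ↦ (eˢ, eˢ)`, the symmetry of second partial derivatives and `H_{t₁} + H_{t₂} = 2` at `(1, 1)`
compute `Φ''(0)`, and `y = nx/2` gives the stated formula.
-/

open Real Set Filter Topology

section ExponentialSeries

variable {ι : Type*} {c m : ι → ℝ} {a b : ℝ}

theorem summable_mul_exp_of_le (hm : ∀ i, 0 ≤ m i) (hc : Summable fun i => c i * exp (m i * b))
    (hab : a ≤ b) : Summable fun i => c i * exp (m i * a) :=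
  hc.abs.of_norm_bounded fun i => by
    rw [Real.norm_eq_abs, abs_mul, abs_mul, abs_of_pos (exp_pos _), abs_of_pos (exp_pos _)]
    gcongr
    exact hm i

theorem summable_mul_mul_exp_of_lt (hm : ∀ i, 0 ≤ m i)
    (hc : Summable fun i => c i * exp (m i * b)) (hab : a < b) :
    Summable fun i => m i * c i * exp (m i * a) := by
  refine (hc.abs.div_const (b - a)).of_norm_bounded fun i => ?_
  have hba : 0 < b - a := sub_pos.2 hab
  -- `u ≤ exp u` at `u = m (b - a)` absorbs the factor `m` into the gap between `a` and `b`
  have key : m i * (b - a) ≤ exp (m i * (b - a)) := by linarith [add_one_le_exp (m i * (b - a))]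
  rw [le_div_iff₀ hba, norm_mul, norm_mul, norm_of_nonneg (hm i), norm_of_nonneg (exp_pos _).le,
    abs_mul, abs_of_pos (exp_pos _)]
  calc m i * ‖c i‖ * exp (m i * a) * (b - a) = ‖c i‖ * exp (m i * a) * (m i * (b - a)) := by ring
    _ ≤ ‖c i‖ * exp (m i * a) * exp (m i * (b - a)) := by gcongr
    _ = |c i| * exp (m i * b) := by rw [mul_assoc, ← exp_add, Real.norm_eq_abs]; ring_nf

theorem hasDerivAt_tsum_mul_exp (hm : ∀ i, 0 ≤ m i) (hc : Summable fun i => c i * exp (m i * b))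
    {s : ℝ} (hs : s < b) :
    HasDerivAt (fun t => ∑' i, c i * exp (m i * t)) (∑' i, m i * c i * exp (m i * s)) s := by
  obtain ⟨b', hsb', hb'b⟩ := exists_between hs
  have hderiv : ∀ i, ∀ t ∈ Iio b',
      HasDerivAt (fun t => c i * exp (m i * t)) (m i * c i * exp (m i * t)) t := fun i t _ => by
    refine ((((hasDerivAt_id' t).const_mul (m i)).exp).const_mul (c i)).congr_deriv ?_
    ring
  have hbound : ∀ i, ∀ t ∈ Iio b', ‖m i * c i * exp (m i * t)‖ ≤ ‖m i * c i * exp (m i * b')‖ :=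
    fun i t ht => by
      simp only [norm_mul, Real.norm_of_nonneg (exp_pos _).le]
      gcongr
      exacts [hm i, le_of_lt ht]
  exact hasDerivAt_tsum_of_isPreconnected (summable_mul_mul_exp_of_lt hm hc hb'b).norm isOpen_Iio
    isPreconnected_Iio hderiv hbound hsb' (summable_mul_exp_of_le hm hc hs.le) hsb'

theorem tsum_sq_mul_eq_of_hasDerivAt (hm : ∀ i, 0 ≤ m i)
    (hc : Summable fun i => c i * exp (m i * b)) (hb : 0 < b) {f f' : ℝ → ℝ} {f'' : ℝ}
    (hf : ∀ s < b, f s = ∑' i, c i * exp (m i * s)) (hf' : ∀ s < b, HasDerivAt f (f' s) s)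
    (hf'' : HasDerivAt f' f'' 0) :
    ∑' i, m i ^ 2 * c i = f'' := by
  have hf'_eq : ∀ s < b, f' s = ∑' i, m i * c i * exp (m i * s) := fun s hs =>
    (hf' s hs).unique <| (hasDerivAt_tsum_mul_exp hm hc hs).congr_of_eventuallyEq <|
      eventually_of_mem (Iio_mem_nhds hs) hf
  have hsecond := hasDerivAt_tsum_mul_exp hm (summable_mul_mul_exp_of_lt hm hc (half_lt_self hb))
    (half_pos hb)
  have := hf''.unique <| hsecond.congr_of_eventuallyEq <|
    eventually_of_mem (Iio_mem_nhds hb) hf'_eq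
  simpa [sq, mul_assoc] using this.symm

end ExponentialSeries

theorem ContinuousLinearMap.map_diag (L : ℝ × ℝ →L[ℝ] ℝ) (u : ℝ) :
    L (u, u) = (L (1, 0) + L (0, 1)) * u := by
  have : ((u, u) : ℝ × ℝ) = u • (((1, 0) : ℝ × ℝ) + (0, 1)) := by simp
  rw [this, map_smul, map_add, smul_eq_mul, mul_comm]

section PartialDerivatives

variable {F : ℝ × ℝ → ℝ} {p : ℝ × ℝ}

theorem differentiableAt_pd1 (hF : ContDiffAt ℝ 2 F p) : DifferentiableAt ℝ (pd1 F) p :=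
  ((hF.fderiv_right (m := 1) (by norm_num)).differentiableAt one_ne_zero).clm_apply
    (differentiableAt_const _)

theorem differentiableAt_pd2 (hF : ContDiffAt ℝ 2 F p) : DifferentiableAt ℝ (pd2 F) p :=
  ((hF.fderiv_right (m := 1) (by norm_num)).differentiableAt one_ne_zero).clm_apply
    (differentiableAt_const _)

theorem pd1_pd2_eq_pd2_pd1 (hF : ContDiffAt ℝ 2 F p) : pd1 (pd2 F) p = pd2 (pd1 F) p := by
  have hd : DifferentiableAt ℝ (fderiv ℝ F) p :=
    (hF.fderiv_right (m := 1) (by norm_num)).differentiableAt one_ne_zero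
  change fderiv ℝ (fun q => fderiv ℝ F q (0, 1)) p (1, 0) =
    fderiv ℝ (fun q => fderiv ℝ F q (1, 0)) p (0, 1)
  rw [fderiv_clm_apply hd (differentiableAt_const _),
    fderiv_clm_apply hd (differentiableAt_const _)]
  simpa using hF.isSymmSndFDerivAt (by simp) (1, 0) (0, 1)

noncomputable def expDiag (F : ℝ × ℝ → ℝ) (s : ℝ) : ℝ := F (exp s, exp s)

noncomputable def expDiagDeriv (F : ℝ × ℝ → ℝ) (s : ℝ) : ℝ :=
  (expDiag (pd1 F) s + expDiag (pd2 F) s) * exp s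

theorem hasDerivAt_expDiag {s : ℝ} (hF : DifferentiableAt ℝ F (exp s, exp s)) :
    HasDerivAt (expDiag F) (expDiagDeriv F s) s := by
  have hcurve : HasDerivAt (fun t => (exp t, exp t)) (exp s, exp s) s :=
    (hasDerivAt_exp s).prodMk (hasDerivAt_exp s)
  refine (hF.hasFDerivAt.comp_hasDerivAt s hcurve).congr_deriv ?_
  exact ContinuousLinearMap.map_diag _ _

theorem hasDerivAt_expDiagDeriv {s : ℝ} (hF : ContDiffAt ℝ 2 F (exp s, exp s)) :
    HasDerivAt (expDiagDeriv F)
      (((expDiag (pd1 (pd1 F)) s + expDiag (pd2 (pd2 F)) s + 2 * expDiag (pd2 (pd1 F)) s) * exp s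
        + expDiag (pd1 F) s + expDiag (pd2 F) s) * exp s) s := by
  refine (((hasDerivAt_expDiag (differentiableAt_pd1 hF)).add
    (hasDerivAt_expDiag (differentiableAt_pd2 hF))).mul (hasDerivAt_exp s)).congr_deriv ?_
  simp only [expDiagDeriv, expDiag, Pi.add_apply, pd1_pd2_eq_pd2_pd1 hF]
  ring

end PartialDerivatives

theorem HasDerivAt.mul_exp_const_mul {a h : ℝ → ℝ} {a' h' y s : ℝ} (ha : HasDerivAt a a' s)
    (hh : HasDerivAt h h' s) :
    HasDerivAt (fun t => a t * Real.exp (y * h t)) ((a' + y * (a s * h')) * Real.exp (y * h s)) s :=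
  (ha.mul ((hh.const_mul y).exp)).congr_deriv (by ring)

section MultipleSheffer

variable {R₁ R₂ : ℝ} {A H : ℝ × ℝ → ℝ} {S : ℕ → ℕ → Polynomial ℝ}

theorem contDiffAt_of_analyticOn_polydisc {F : ℝ × ℝ → ℝ} {n : WithTop ℕ∞} {p : ℝ × ℝ}
    (hF : AnalyticOn ℝ F {p : ℝ × ℝ | |p.1| < R₁ ∧ |p.2| < R₂}) (hp : |p.1| < R₁ ∧ |p.2| < R₂) :
    ContDiffAt ℝ n F p := by
  have hopen : IsOpen {p : ℝ × ℝ | |p.1| < R₁ ∧ |p.2| < R₂} :=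
    (isOpen_lt (continuous_abs.comp continuous_fst) continuous_const).inter
      (isOpen_lt (continuous_abs.comp continuous_snd) continuous_const)
  exact (hopen.analyticOn_iff_analyticOnNhd.1 hF p hp).contDiffAt

def HasShefferGeneratingFunction (R₁ R₂ : ℝ) (A H : ℝ × ℝ → ℝ) (S : ℕ → ℕ → Polynomial ℝ) : Prop :=
  ∀ x : ℝ, 0 ≤ x → ∀ t₁ t₂ : ℝ, |t₁| < R₁ → |t₂| < R₂ →
    Summable (fun k : ℕ × ℕ =>
      (S k.1 k.2).eval x * t₁ ^ k.1 * t₂ ^ k.2 / (k.1.factorial * k.2.factorial)) ∧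
    A (t₁, t₂) * Real.exp (x * H (t₁, t₂)) =
      ∑' k : ℕ × ℕ, (S k.1 k.2).eval x * t₁ ^ k.1 * t₂ ^ k.2 / (k.1.factorial * k.2.factorial)

noncomputable def shefferCoeff (S : ℕ → ℕ → Polynomial ℝ) (y : ℝ) (k : ℕ × ℕ) : ℝ :=
  (S k.1 k.2).eval y / (k.1.factorial * k.2.factorial)

theorem HasShefferGeneratingFunction.expDiag_eq_tsum
    (hgen : HasShefferGeneratingFunction R₁ R₂ A H S) {y s : ℝ} (hy : 0 ≤ y)
    (h₁ : exp s < R₁) (h₂ : exp s < R₂) :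
    Summable (fun k : ℕ × ℕ => shefferCoeff S y k * exp ((k.1 + k.2 : ℝ) * s)) ∧
      expDiag A s * exp (y * expDiag H s) =
        ∑' k : ℕ × ℕ, shefferCoeff S y k * exp ((k.1 + k.2 : ℝ) * s) := by
  have hterm (k : ℕ × ℕ) : (S k.1 k.2).eval y * exp s ^ k.1 * exp s ^ k.2 /
      (k.1.factorial * k.2.factorial) = shefferCoeff S y k * exp ((k.1 + k.2 : ℝ) * s) := by
    rw [shefferCoeff, add_mul, exp_add, exp_nat_mul, exp_nat_mul]
    ring
  rw [← abs_of_pos (exp_pos s)] at h₁ h₂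
  obtain ⟨hsum, heq⟩ := hgen y hy _ _ h₁ h₂
  exact ⟨hsum.congr hterm, heq.trans (tsum_congr hterm)⟩

end MultipleSheffer

theorem multiple_sheffer_sum_e2_general
    (R₁ R₂ : ℝ) (hR₁ : 1 < R₁) (hR₂ : 1 < R₂)
    (A H : ℝ × ℝ → ℝ)
    (hA : AnalyticOn ℝ A {p : ℝ × ℝ | |p.1| < R₁ ∧ |p.2| < R₂})
    (hH : AnalyticOn ℝ H {p : ℝ × ℝ | |p.1| < R₁ ∧ |p.2| < R₂})
    (S : ℕ → ℕ → Polynomial ℝ)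
    (hgen : ∀ x : ℝ, 0 ≤ x → ∀ t₁ t₂ : ℝ, |t₁| < R₁ → |t₂| < R₂ →
      Summable (fun k : ℕ × ℕ =>
        (S k.1 k.2).eval x * t₁ ^ k.1 * t₂ ^ k.2 / (k.1.factorial * k.2.factorial)) ∧
      A (t₁, t₂) * Real.exp (x * H (t₁, t₂)) =
        ∑' k : ℕ × ℕ,
          (S k.1 k.2).eval x * t₁ ^ k.1 * t₂ ^ k.2 / (k.1.factorial * k.2.factorial))
    (hH1 : pd1 H (1, 1) = 1) (hH2 : pd2 H (1, 1) = 1)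
    (x : ℝ) (hx : 0 ≤ x) (n : ℕ) :
    ∑' k : ℕ × ℕ,
        ((k.1 + k.2 : ℝ)) ^ 2 * (S k.1 k.2).eval (n * x / 2) /
          (k.1.factorial * k.2.factorial) =
      ((n : ℝ) ^ 2 * x ^ 2 * A (1, 1) +
          n * x * ((A (1, 1) * pd1 (pd1 H) (1, 1) + A (1, 1) * pd2 (pd2 H) (1, 1)) / 2 +
            A (1, 1) * pd2 (pd1 H) (1, 1) + 2 * pd1 A (1, 1) + 2 * pd2 A (1, 1) + A (1, 1)) +
          pd1 (pd1 A) (1, 1) + pd2 (pd2 A) (1, 1) + 2 * pd2 (pd1 A) (1, 1) +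
          pd1 A (1, 1) + pd2 A (1, 1)) *
        Real.exp ((n * x / 2) * H (1, 1)) := by
  set y : ℝ := n * x / 2
  obtain ⟨ρ, h1ρ, hρ⟩ := exists_between (lt_min hR₁ hR₂)
  have hlogρ : 0 < log ρ := log_pos h1ρ
  have hexp_lt : ∀ s ≤ log ρ, exp s < R₁ ∧ exp s < R₂ := fun s hs =>
    lt_min_iff.1 (((exp_le_exp.2 hs).trans_eq (exp_log (by linarith))).trans_lt hρ)
  have hsmooth : ∀ F : ℝ × ℝ → ℝ, AnalyticOn ℝ F {p : ℝ × ℝ | |p.1| < R₁ ∧ |p.2| < R₂} →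
      ∀ s ≤ log ρ, ContDiffAt ℝ 2 F (exp s, exp s) := fun F hF s hs =>
    contDiffAt_of_analyticOn_polydisc hF (by simpa [abs_of_pos (exp_pos s)] using hexp_lt s hs)
  have hseries := fun s (hs : s ≤ log ρ) =>
    HasShefferGeneratingFunction.expDiag_eq_tsum hgen (y := y) (by positivity) (hexp_lt s hs).1
      (hexp_lt s hs).2
  have hf' : ∀ s < log ρ, HasDerivAt (fun s => expDiag A s * exp (y * expDiag H s))
      ((expDiagDeriv A s + y * (expDiag A s * expDiagDeriv H s)) * exp (y * expDiag H s)) s :=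
    fun s hs => (hasDerivAt_expDiag ((hsmooth A hA s hs.le).differentiableAt two_ne_zero)
      ).mul_exp_const_mul (hasDerivAt_expDiag ((hsmooth H hH s hs.le).differentiableAt two_ne_zero))
  have hA_one := hsmooth A hA 0 hlogρ.le
  have hH_one := hsmooth H hH 0 hlogρ.le
  have hf'' := ((hasDerivAt_expDiagDeriv hA_one).add
    (((hasDerivAt_expDiag (hA_one.differentiableAt two_ne_zero)).mul
      (hasDerivAt_expDiagDeriv hH_one)).const_mul y)).mul_exp_const_mul (y := y)
    (hasDerivAt_expDiag (hH_one.differentiableAt two_ne_zero))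
  refine (tsum_congr fun k => mul_div_assoc _ _ _).trans <|
    (tsum_sq_mul_eq_of_hasDerivAt (fun k => by positivity) (hseries _ le_rfl).1 hlogρ
      (fun s hs => (hseries s hs.le).2) hf' hf'').trans ?_
  simp only [expDiagDeriv, expDiag, Pi.add_apply, Pi.mul_apply, exp_zero, hH1, hH2, y]
  ring

/-- the second-moment identity for the multiple Sheffer generating function. -/
theorem multiple_sheffer_sum_e2
    (R₁ R₂ : ℝ) (hR₁ : 1 < R₁) (hR₂ : 1 < R₂)
    (A H : ℝ × ℝ → ℝ)
    (hA : AnalyticOn ℝ A {p : ℝ × ℝ | |p.1| < R₁ ∧ |p.2| < R₂})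
    (hH : AnalyticOn ℝ H {p : ℝ × ℝ | |p.1| < R₁ ∧ |p.2| < R₂})
    (hA0 : A (0, 0) ≠ 0) (hH0 : H (0, 0) ≠ 0)
    (S : ℕ → ℕ → Polynomial ℝ)
    (hgen : ∀ x : ℝ, 0 ≤ x → ∀ t₁ t₂ : ℝ, |t₁| < R₁ → |t₂| < R₂ →
      Summable (fun k : ℕ × ℕ =>
        (S k.1 k.2).eval x * t₁ ^ k.1 * t₂ ^ k.2 / (k.1.factorial * k.2.factorial)) ∧
      A (t₁, t₂) * Real.exp (x * H (t₁, t₂)) =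
        ∑' k : ℕ × ℕ,
          (S k.1 k.2).eval x * t₁ ^ k.1 * t₂ ^ k.2 / (k.1.factorial * k.2.factorial))
    (hsum1 : ∀ y : ℝ, 0 ≤ y → Summable (fun k : ℕ × ℕ =>
      (k.1 + k.2 : ℝ) * (S k.1 k.2).eval y / (k.1.factorial * k.2.factorial)))
    (hsum2 : ∀ y : ℝ, 0 ≤ y → Summable (fun k : ℕ × ℕ =>
      ((k.1 + k.2 : ℝ)) ^ 2 * (S k.1 k.2).eval y / (k.1.factorial * k.2.factorial)))
    (hH1 : pd1 H (1, 1) = 1) (hH2 : pd2 H (1, 1) = 1)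
    (x : ℝ) (hx : 0 ≤ x) (n : ℕ) (hn : 1 ≤ n) :
    ∑' k : ℕ × ℕ,
        ((k.1 + k.2 : ℝ)) ^ 2 * (S k.1 k.2).eval (n * x / 2) /
          (k.1.factorial * k.2.factorial) =
      ((n : ℝ) ^ 2 * x ^ 2 * A (1, 1) +
          n * x * ((A (1, 1) * pd1 (pd1 H) (1, 1) + A (1, 1) * pd2 (pd2 H) (1, 1)) / 2 +
            A (1, 1) * pd2 (pd1 H) (1, 1) + 2 * pd1 A (1, 1) + 2 * pd2 A (1, 1) + A (1, 1)) +
          pd1 (pd1 A) (1, 1) + pd2 (pd2 A) (1, 1) + 2 * pd2 (pd1 A) (1, 1) +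
          pd1 A (1, 1) + pd2 A (1, 1)) *
        Real.exp ((n * x / 2) * H (1, 1)) :=
  multiple_sheffer_sum_e2_general R₁ R₂ hR₁ hR₂ A H hA hH S hgen hH1 hH2 x hx n
end

section
/- (Gavrea–Raşa inequality) Let a > 0 and let K be a positive linear operator on C([0,a], ℝ) (i.e. K is linear and K(g) ≥ 0 pointwise whenever g ≥ 0 pointwise) satisfying K(1;x) = 1 for all x ∈ [0,a], where 1 denotes the constant function 1. Then for every twice continuously differentiable function g : [0,a] → ℝ and every x ∈ [0,a], |K(g;x) − g(x)| ≤ ‖g'‖·√(K(ψ_x; x)) + (1/2)·‖g''‖·K(ψ_x; x), where ψ_x(s) = (s − x)² and ‖·‖ denotes the supremum norm on [0,a]. -/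
/-!
Write `g = g(x) + g'(x)(s - x) + R(s)`. Taylor's formula gives `|R(s)| ≤ ‖g''‖/2 · (s - x)²`, and
positivity of `K` turns this into `|K(R; x)| ≤ ‖g''‖/2 · K(ψ_x; x)`. Since `K` fixes constants, the
remaining term is `g'(x) · K(s - x; x)`, and `K(s - x; x)² ≤ K(ψ_x; x)` is the Cauchy–Schwarz
inequality for the positive functional `K(·; x)`, which has total mass `1`.
-/

open Set

theorem Convex.isMinOn_of_hasDerivWithinAt {D : Set ℝ} (hD : Convex ℝ D) {f f' : ℝ → ℝ}
    {x : ℝ} (hf : ∀ t ∈ D, HasDerivWithinAt f (f' t) D t)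
    (hright : ∀ t ∈ interior D, x < t → 0 ≤ f' t) (hleft : ∀ t ∈ interior D, t < x → f' t ≤ 0)
    (hx : x ∈ D) : IsMinOn f D x := by
  have hcont : ContinuousOn f D := fun t ht => (hf t ht).continuousWithinAt
  have hderiv : ∀ E ⊆ D, ∀ t ∈ interior E, HasDerivWithinAt f (f' t) (interior E) t :=
    fun E hE t ht => ((hf t (hE (interior_subset ht))).hasDerivAt
      (mem_interior_iff_mem_nhds.1 (interior_mono hE ht))).hasDerivWithinAt
  intro s hs
  rcases le_total x s with hxs | hsx
  · refine monotoneOn_of_hasDerivWithinAt_nonneg (hD.inter (convex_Ici x))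
      (hcont.mono inter_subset_left) (hderiv _ inter_subset_left) (fun t ht => ?_)
      ⟨hx, self_mem_Ici⟩ ⟨hs, hxs⟩ hxs
    rw [interior_inter, interior_Ici] at ht
    exact hright t ht.1 ht.2
  · refine antitoneOn_of_hasDerivWithinAt_nonpos (hD.inter (convex_Iic x))
      (hcont.mono inter_subset_left) (hderiv _ inter_subset_left) (fun t ht => ?_)
      ⟨hs, hsx⟩ ⟨hx, self_mem_Iic⟩ hsx
    rw [interior_inter, interior_Iic] at ht
    exact hleft t ht.1 ht.2

-- Both `M / 2 * (t - x) ^ 2 - f t` and `M / 2 * (t - x) ^ 2 + f t` are minimal at `x`.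
theorem Convex.abs_le_of_abs_hasDerivWithinAt_le {D : Set ℝ} (hD : Convex ℝ D)
    {f f' : ℝ → ℝ} {x M : ℝ} (hf : ∀ t ∈ D, HasDerivWithinAt f (f' t) D t)
    (hbound : ∀ t ∈ D, |f' t| ≤ M * |t - x|) (hx : x ∈ D) (hfx : f x = 0)
    {s : ℝ} (hs : s ∈ D) : |f s| ≤ M / 2 * (s - x) ^ 2 := by
  have key : ∀ σ : ℝ, |σ| = 1 → σ * f s ≤ M / 2 * (s - x) ^ 2 := by
    intro σ hσ
    have hφ : ∀ t ∈ D, HasDerivWithinAt (fun t => M / 2 * (t - x) ^ 2 - σ * f t)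
        (M * (t - x) - σ * f' t) D t := fun t ht =>
      ((((hasDerivAt_id t).sub_const x).pow 2).const_mul (M / 2)).hasDerivWithinAt.sub
        ((hf t ht).const_mul σ) |>.congr_deriv (by simp; ring)
    have hσf' : ∀ t ∈ interior D, |σ * f' t| ≤ M * |t - x| := fun t ht => by
      rw [abs_mul, hσ, one_mul]; exact hbound t (interior_subset ht)
    have hmin := hD.isMinOn_of_hasDerivWithinAt hφ
      (fun t ht hxt => by
        have := le_abs_self (σ * f' t) |>.trans (hσf' t ht)
        rw [abs_of_pos (sub_pos.2 hxt)] at this; linarith)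
      (fun t ht htx => by
        have := neg_abs_le (σ * f' t) |>.trans' (neg_le_neg (hσf' t ht))
        rw [abs_of_neg (sub_neg.2 htx)] at this; linarith) hx
    have := isMinOn_iff.1 hmin s hs
    simp only [hfx, sub_self] at this
    linarith
  exact abs_le.2 ⟨by linarith [key (-1) (by simp)], by simpa using key 1 (by simp)⟩

theorem Convex.abs_sub_sub_deriv_mul_sub_le {D : Set ℝ} (hD : Convex ℝ D)
    {g g' g'' : ℝ → ℝ} {M x s : ℝ} (hg' : ∀ t ∈ D, HasDerivWithinAt g (g' t) D t)
    (hg'' : ∀ t ∈ D, HasDerivWithinAt g' (g'' t) D t) (hM : ∀ t ∈ D, |g'' t| ≤ M)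
    (hx : x ∈ D) (hs : s ∈ D) : |g s - g x - g' x * (s - x)| ≤ M / 2 * (s - x) ^ 2 :=
  hD.abs_le_of_abs_hasDerivWithinAt_le (f := fun t => g t - g x - g' x * (t - x))
    (f' := fun t => g' t - g' x)
    (fun t ht => (((hg' t ht).sub_const (g x)).sub
      (((hasDerivAt_id t).sub_const x).const_mul (g' x)).hasDerivWithinAt).congr_deriv (by simp))
    (fun t ht => by
      simpa [Real.norm_eq_abs] using
        hD.norm_image_sub_le_of_norm_hasDerivWithin_le hg'' (by simpa using hM) hx ht)
    hx (by simp) hs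

namespace PositiveOperator

variable {X : Type*} [TopologicalSpace X] {K : C(X, ℝ) →ₗ[ℝ] C(X, ℝ)}

theorem apply_le_apply_of_le (hK : ∀ g : C(X, ℝ), (∀ s, 0 ≤ g s) → ∀ x, 0 ≤ K g x)
    {f g : C(X, ℝ)} (hfg : ∀ s, f s ≤ g s) (x : X) :
    K f x ≤ K g x := by
  have := hK (g - f) (fun s => sub_nonneg.2 (hfg s)) x
  simpa [map_sub] using this

theorem abs_apply_le_apply_of_abs_le (hK : ∀ g : C(X, ℝ), (∀ s, 0 ≤ g s) → ∀ x, 0 ≤ K g x)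
    {f g : C(X, ℝ)} (hfg : ∀ s, |f s| ≤ g s) (x : X) :
    |K f x| ≤ K g x := by
  refine abs_le.2 ⟨?_, apply_le_apply_of_le hK (fun s => (le_abs_self _).trans (hfg s)) x⟩
  have := apply_le_apply_of_le hK (f := -g) (g := f) (fun s => by
    simpa using neg_le_of_abs_le (hfg s)) x
  simpa using this

theorem sq_apply_le_apply_sq (hK : ∀ g : C(X, ℝ), (∀ s, 0 ≤ g s) → ∀ x, 0 ≤ K g x)
    {x : X} (hK1 : K 1 x = 1) (f : C(X, ℝ)) :
    K f x ^ 2 ≤ K (f ^ 2) x := by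
  set c := K f x
  have := hK (f ^ 2 - (2 * c) • f + c ^ 2 • 1) (fun s => by
    have : (f ^ 2 - (2 * c) • f + c ^ 2 • 1 : C(X, ℝ)) s = (f s - c) ^ 2 := by
      simp only [ContinuousMap.add_apply, ContinuousMap.sub_apply, ContinuousMap.pow_apply,
        ContinuousMap.smul_apply, smul_eq_mul, ContinuousMap.one_apply, mul_one]
      ring
    rw [this]; positivity) x
  simp only [map_add, map_sub, map_smul, ContinuousMap.add_apply, ContinuousMap.sub_apply,
    ContinuousMap.smul_apply, smul_eq_mul, hK1, mul_one] at this
  nlinarith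

theorem abs_apply_sub_le_of_abs_sub_le (hK : ∀ g : C(X, ℝ), (∀ s, 0 ≤ g s) → ∀ x, 0 ≤ K g x)
    {x : X} (hK1 : K 1 x = 1) {f e : C(X, ℝ)}
    {c₀ c₁ B : ℝ} (hf : ∀ s, |f s - c₀ - c₁ * e s| ≤ B * e s ^ 2) :
    |K f x - c₀| ≤ |c₁| * √(K (e ^ 2) x) + B * K (e ^ 2) x := by
  set r := f - c₀ • 1 - c₁ • e
  have hdecomp : K f x - c₀ = c₁ * K e x + K r x := by
    simp [r, map_sub, map_smul, hK1]
  have hr : |K r x| ≤ B * K (e ^ 2) x := by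
    have := abs_apply_le_apply_of_abs_le hK (g := B • e ^ 2) (f := r)
      (fun s => by simpa [r] using hf s) x
    rwa [map_smul, ContinuousMap.smul_apply, smul_eq_mul] at this
  have he : |K e x| ≤ √(K (e ^ 2) x) := Real.abs_le_sqrt (sq_apply_le_apply_sq hK hK1 e)
  calc |K f x - c₀| ≤ |c₁| * |K e x| + |K r x| := by
        rw [hdecomp, ← abs_mul]; exact abs_add_le _ _
    _ ≤ |c₁| * √(K (e ^ 2) x) + B * K (e ^ 2) x := by gcongr

end PositiveOperator

/-- Gavrea–Raşa inequality: for a positive linear operator `K` on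
`C([0,a],ℝ)` with `K(1;x) = 1`, and `g` twice continuously differentiable on `[0,a]`,
`|K(g;x) − g(x)| ≤ ‖g'‖·√(K(ψ_x;x)) + (1/2)·‖g''‖·K(ψ_x;x)` where `ψ_x(s) = (s−x)²`. -/
theorem gavrea_rasa
    (a : ℝ)
    (K : C(Set.Icc (0 : ℝ) a, ℝ) →ₗ[ℝ] C(Set.Icc (0 : ℝ) a, ℝ))
    (hKpos : ∀ g : C(Set.Icc (0 : ℝ) a, ℝ), (∀ s, 0 ≤ g s) → ∀ x, 0 ≤ K g x)
    (hK1 : ∀ x, K (ContinuousMap.const _ 1) x = 1)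
    (g g' g'' : ℝ → ℝ)
    (hgc : ContinuousOn g (Set.Icc 0 a))
    (hg' : ∀ s ∈ Set.Icc (0 : ℝ) a, HasDerivWithinAt g (g' s) (Set.Icc 0 a) s)
    (hg'' : ∀ s ∈ Set.Icc (0 : ℝ) a, HasDerivWithinAt g' (g'' s) (Set.Icc 0 a) s)
    (hg''c : ContinuousOn g'' (Set.Icc 0 a))
    (x : Set.Icc (0 : ℝ) a) :
    |K ⟨(Set.Icc (0 : ℝ) a).restrict g, hgc.restrict⟩ x - g x| ≤
      (⨆ s : Set.Icc (0 : ℝ) a, |g' s|) *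
          Real.sqrt (K ⟨fun s => ((s : ℝ) - (x : ℝ)) ^ 2, by fun_prop⟩ x) +
        1 / 2 * (⨆ s : Set.Icc (0 : ℝ) a, |g'' s|) *
          K ⟨fun s => ((s : ℝ) - (x : ℝ)) ^ 2, by fun_prop⟩ x := by
  have abs_le_iSup : ∀ {h : ℝ → ℝ}, ContinuousOn h (Icc 0 a) →
      ∀ s : Icc (0 : ℝ) a, |h s| ≤ ⨆ t : Icc (0 : ℝ) a, |h t| :=
    fun hh s => le_ciSup (isCompact_range hh.domRestrict.abs).bddAbove s
  have hg'c : ContinuousOn g' (Icc 0 a) := fun t ht => (hg'' t ht).continuousWithinAt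
  let e : C(Icc (0 : ℝ) a, ℝ) := ⟨fun s => (s : ℝ) - x, by fun_prop⟩
  have hψ : (⟨fun s => ((s : ℝ) - (x : ℝ)) ^ 2, by fun_prop⟩ : C(Icc (0 : ℝ) a, ℝ)) = e ^ 2 := rfl
  rw [hψ]
  refine (PositiveOperator.abs_apply_sub_le_of_abs_sub_le hKpos (hK1 x) (e := e) (c₁ := g' x)
    fun s => (convex_Icc 0 a).abs_sub_sub_deriv_mul_sub_le hg' hg''
      (fun t ht => abs_le_iSup hg''c ⟨t, ht⟩) x.2 s.2).trans ?_
  nlinarith [mul_le_mul_of_nonneg_right (abs_le_iSup hg'c x) (Real.sqrt_nonneg (K (e ^ 2) x))]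
end

section
/- For every real x ≥ 0 and every integer n ≥ 1, e^{-2-nx}·Σ_{k₁=0}^∞ Σ_{k₂=0}^∞ ((nx/2 + 1)^{k₁+k₂}/(k₁!·k₂!))·((k₁+k₂)/n)² = x² + 5x/n + 6/n²; that is, G_n(e₂;x) = x² + 5x/n + 6/n² for the operator attached to the multiple Sheffer polynomials (x+1)^{k₁+k₂}. -/
/-!
With `y = n x / 2 + 1`, expanding `(k₁ + k₂)² = k₁² + 2 k₁ k₂ + k₂²` splits the double series
into products of the Poisson moments `∑ k^j y^k / k! = e^y, y e^y, (y² + y) e^y` (`j = 0, 1, 2`),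
giving `(4 y² + 2 y) e^{2y} / n²`. Since `2 y = n x + 2`, the factor `e^{-2-nx}` cancels `e^{2y}`
and `4 y² + 2 y = n² x² + 5 n x + 6`.
-/

open Nat Real

lemma hasSum_pow_div_factorial (y : ℝ) : HasSum (fun k : ℕ => y ^ k / k !) (exp y) := by
  simpa [exp_eq_exp_ℝ] using NormedSpace.expSeries_div_hasSum_exp y

lemma hasSum_of_hasSum_succ {G : Type*} [AddCommGroup G] [TopologicalSpace G]
    [IsTopologicalAddGroup G] {f : ℕ → G} {a : G} (h0 : f 0 = 0)
    (h : HasSum (fun k => f (k + 1)) a) : HasSum f a :=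
  (hasSum_nat_add_iff' 1).mp (by simpa [h0] using h)

lemma hasSum_natCast_mul_pow_div_factorial (y : ℝ) :
    HasSum (fun k : ℕ => (k : ℝ) * y ^ k / k !) (y * exp y) := by
  refine hasSum_of_hasSum_succ (by simp) ?_
  have hshift (k : ℕ) : ((k + 1 : ℕ) : ℝ) * y ^ (k + 1) / (k + 1)! = y * (y ^ k / k !) := by
    rw [factorial_succ, pow_succ]
    push_cast
    field_simp
  simpa only [hshift] using (hasSum_pow_div_factorial y).mul_left y

lemma hasSum_natCast_sq_mul_pow_div_factorial (y : ℝ) :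
    HasSum (fun k : ℕ => (k : ℝ) ^ 2 * y ^ k / k !) ((y ^ 2 + y) * exp y) := by
  refine hasSum_of_hasSum_succ (by simp) ?_
  have hshift (k : ℕ) : ((k + 1 : ℕ) : ℝ) ^ 2 * y ^ (k + 1) / (k + 1)! =
      y * ((k : ℝ) * y ^ k / k !) + y * (y ^ k / k !) := by
    rw [factorial_succ, pow_succ]
    push_cast
    field_simp
    ring
  have hsum := ((hasSum_natCast_mul_pow_div_factorial y).mul_left y).add
    ((hasSum_pow_div_factorial y).mul_left y)
  rw [show y * (y * exp y) + y * exp y = (y ^ 2 + y) * exp y by ring] at hsum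
  simpa only [hshift] using hsum

lemma HasSum.mul_real {ι κ : Type*} {f : ι → ℝ} {g : κ → ℝ} {s t : ℝ}
    (hf : HasSum f s) (hg : HasSum g t) :
    HasSum (fun p : ι × κ => f p.1 * g p.2) (s * t) :=
  hf.mul hg (summable_mul_of_summable_norm hf.summable.norm hg.summable.norm)

lemma hasSum_pow_add_div_factorial_mul_factorial_mul_sq (y : ℝ) :
    HasSum (fun k : ℕ × ℕ => y ^ (k.1 + k.2) / (k.1 ! * k.2 !) * ((k.1 + k.2 : ℝ)) ^ 2)
      ((4 * y ^ 2 + 2 * y) * exp (2 * y)) := by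
  have h0 := hasSum_pow_div_factorial y
  have h1 := hasSum_natCast_mul_pow_div_factorial y
  have h2 := hasSum_natCast_sq_mul_pow_div_factorial y
  convert ((h2.mul_real h0).add ((h1.mul_real h1).mul_left 2)).add (h0.mul_real h2) using 1
  · funext k
    field_simp
    ring
  · rw [two_mul y, exp_add]
    ring

theorem Gxk_e2_general (x : ℝ) (n : ℕ) (hn : 1 ≤ n) :
    Real.exp (-2 - n * x) *
        ∑' k : ℕ × ℕ, (n * x / 2 + 1) ^ (k.1 + k.2) / (k.1.factorial * k.2.factorial) *
          ((k.1 + k.2 : ℝ) / n) ^ 2 =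
      x ^ 2 + 5 * x / n + 6 / (n : ℝ) ^ 2 := by
  have hn0 : (n : ℝ) ≠ 0 := Nat.cast_ne_zero.mpr (by omega)
  set y : ℝ := n * x / 2 + 1
  have hsum : ∑' k : ℕ × ℕ, y ^ (k.1 + k.2) / (k.1.factorial * k.2.factorial) *
      ((k.1 + k.2 : ℝ) / n) ^ 2 = (4 * y ^ 2 + 2 * y) * exp (2 * y) / (n : ℝ) ^ 2 := by
    rw [← ((hasSum_pow_add_div_factorial_mul_factorial_mul_sq y).div_const _).tsum_eq]
    simp only [div_pow, mul_div_assoc]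
  have hexp : exp (-2 - n * x) * exp (2 * y) = 1 := by
    rw [← exp_add, show -2 - n * x + 2 * y = 0 by ring, exp_zero]
  rw [hsum, mul_div_assoc', ← mul_assoc, mul_comm (exp _), mul_assoc, hexp]
  field_simp
  ring

/-- `G_n(e₂;x) = x² + 5x/n + 6/n²` for the operator attached to the
multiple Sheffer polynomials `(x+1)^{k₁+k₂}`. -/
theorem Gxk_e2 (x : ℝ) (hx : 0 ≤ x) (n : ℕ) (hn : 1 ≤ n) :
    Real.exp (-2 - n * x) *
        ∑' k : ℕ × ℕ, (n * x / 2 + 1) ^ (k.1 + k.2) / (k.1.factorial * k.2.factorial) *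
          ((k.1 + k.2 : ℝ) / n) ^ 2 =
      x ^ 2 + 5 * x / n + 6 / (n : ℝ) ^ 2 :=
  Gxk_e2_general x n hn
end

section
/- For every real x ≥ 0 and every integer n ≥ 1, the second central moment satisfies (e^{-nx}/2)·Σ_{k₁,k₂≥0, k₁+k₂≥1} ((k₁+k₂)·(nx/2)^{k₁+k₂-1}/(k₁!·k₂!))·((k₁+k₂)/n − x)² = x/n + 1/n²; that is, G_n((e₁ − x)²; x) = x/n + 1/n² for the operator attached to the multiple Sheffer polynomials (k₁+k₂)·x^{k₁+k₂-1}, where (e₁ − x)² denotes the function s ↦ (s − x)². -/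
/-!
Grouping the terms by the total degree `m = k₁ + k₂` and using
`∑_{k₁+k₂=m} 1/(k₁! k₂!) = 2^m/m!` collapses the double series to
`e^{-nx} ∑_j (nx)^j/j! · f((j+1)/n)`, a Szász operator shifted by `1/n`. For `f = (e₁ - x)²`
this is `1/n²` times the second moment of a Poisson(`nx`) variable `J` about `nx - 1`,
i.e. `(Var J + 1)/n² = (nx + 1)/n²`.
-/

open Finset Nat

theorem sum_antidiagonal_pow_div_factorial_mul_factorial {K : Type*} [Field K] [CharZero K]
    (a b : K) (m : ℕ) :
    ∑ p ∈ antidiagonal m, a ^ p.1 * b ^ p.2 / (p.1 ! * p.2 !) = (a + b) ^ m / m ! := by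
  rw [(Commute.all a b).add_pow', sum_div]
  refine sum_congr rfl fun p hp => ?_
  rw [HasAntidiagonal.mem_antidiagonal] at hp
  subst hp
  have : ((p.1 + p.2)! : K) ≠ 0 := Nat.cast_ne_zero.mpr (factorial_ne_zero _)
  rw [nsmul_eq_mul, Nat.cast_add_choose]
  field_simp

theorem HasSum.of_sum_antidiagonal_of_nonneg {f : ℕ × ℕ → ℝ} {s : ℝ} (hf : ∀ p, 0 ≤ f p)
    (h : HasSum (fun m => ∑ p ∈ antidiagonal m, f p) s) : HasSum f s := by
  have hfiber : ∀ m, HasSum (fun q : antidiagonal m => f q) (∑ p ∈ antidiagonal m, f p) :=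
    fun m => (antidiagonal m).hasSum f
  rw [← HasAntidiagonal.sigmaAntidiagonalEquivProd.hasSum_iff]
  refine h.sigma_of_hasSum hfiber ?_
  refine (summable_sigma_of_nonneg fun _ => hf _).mpr ⟨fun m => (hfiber m).summable, ?_⟩
  exact h.summable.congr fun m => ((hfiber m).tsum_eq).symm

theorem hasSum_descFactorial_mul_pow_div_factorial (r : ℕ) (y : ℝ) :
    HasSum (fun j => (j.descFactorial r : ℝ) * y ^ j / j !) (y ^ r * Real.exp y) := by
  rw [← hasSum_nat_add_iff' r, sum_eq_zero fun j hj => by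
    rw [Nat.descFactorial_eq_zero_iff_lt.mpr (mem_range.mp hj)]; simp, sub_zero]
  have hshift : ∀ k, ((k + r).descFactorial r : ℝ) * y ^ (k + r) / (k + r)! =
      y ^ r * (y ^ k / k !) := by
    intro k
    have := Nat.factorial_mul_descFactorial (Nat.le_add_left r k)
    rw [Nat.add_sub_cancel] at this
    rw [← this]
    push_cast
    field_simp
    ring
  simp only [hshift]
  rw [Real.exp_eq_exp_ℝ]
  exact (NormedSpace.expSeries_div_hasSum_exp y).mul_left _

theorem hasSum_pow_div_factorial_mul_succ_sub_sq (y : ℝ) :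
    HasSum (fun j => y ^ j / j ! * (j + 1 - y) ^ 2) ((y + 1) * Real.exp y) := by
  have h0 := hasSum_descFactorial_mul_pow_div_factorial 0 y
  have h1 := hasSum_descFactorial_mul_pow_div_factorial 1 y
  have h2 := hasSum_descFactorial_mul_pow_div_factorial 2 y
  convert (h2.add (h1.mul_left (3 - 2 * y))).add (h0.mul_left ((1 - y) ^ 2)) using 1
  · ext j
    simp only [Nat.descFactorial_zero, Nat.descFactorial_one, Nat.cast_descFactorial_two]
    push_cast
    ring
  · ring

/-- the second central moment `G_n((e₁ − x)²;x) = x/n + 1/n²` for the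
operator attached to the multiple Sheffer polynomials `(k₁+k₂)·x^{k₁+k₂−1}`. -/
theorem Gkxk_central_moment (x : ℝ) (hx : 0 ≤ x) (n : ℕ) (hn : 1 ≤ n) :
    Real.exp (-(n * x)) / 2 *
        ∑' k : ℕ × ℕ,
          (k.1 + k.2 : ℝ) * (n * x / 2) ^ (k.1 + k.2 - 1) /
            (k.1.factorial * k.2.factorial) * ((k.1 + k.2 : ℝ) / n - x) ^ 2 =
      x / n + 1 / (n : ℝ) ^ 2 := by
  have hn0 : (n : ℝ) ≠ 0 := Nat.cast_ne_zero.mpr (by omega)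
  have hdegree : HasSum (fun m : ℕ => (m : ℝ) * (n * x / 2) ^ (m - 1) * ((m : ℝ) / n - x) ^ 2 *
      ((1 + 1) ^ m / m !)) (2 * (n * x + 1) * Real.exp (n * x) / n ^ 2) := by
    rw [← hasSum_nat_add_iff' 1, sum_range_one, Nat.cast_zero, zero_mul, zero_mul, zero_mul,
      sub_zero, show 2 * (n * x + 1) * Real.exp (n * x) / n ^ 2
        = 2 / (n : ℝ) ^ 2 * ((n * x + 1) * Real.exp (n * x)) by ring]
    refine ((hasSum_pow_div_factorial_mul_succ_sub_sq (n * x)).mul_left _).congr_fun fun j => ?_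
    simp only [Nat.add_sub_cancel, pow_succ, factorial_succ, div_pow, one_add_one_eq_two]
    push_cast
    field_simp
  rw [HasSum.tsum_eq (.of_sum_antidiagonal_of_nonneg ?_ (hdegree.congr_fun fun m => ?_)),
    Real.exp_neg]
  · field_simp
  · intro k
    positivity
  · rw [← sum_antidiagonal_pow_div_factorial_mul_factorial, mul_sum]
    refine sum_congr rfl fun p hp => ?_
    rw [HasAntidiagonal.mem_antidiagonal] at hp
    subst hp
    simp only [one_pow, Nat.cast_add]
    ring
end
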